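/- arXiv:1112.0354 — 7 statements merged into one kernel-verified Lean document; each statement's English description precedes it below -/
import Mathlib

section
/- Let κ be an uncountable regular cardinal, endow the space of functions from κ to 2 with the bounded topology (basic open sets are determined by partial functions with domain of size < κ). If this space is κ-compact (every open cover has a subcover of size < κ), then κ is a strongly inaccessible cardinal. -/
open Cardinal Set

/-- The bounded topology on `^κ2`, with basic open sets determined by partial
functions with domain of size `< κ`. -/
def boundedTopologyPF (κ : Cardinal) : TopologicalSpace (κ.ord.ToType → Bool) :=
  TopologicalSpace.generateFrom
    {U | ∃ (d : Set κ.ord.ToType) (σ : κ.ord.ToType → Bool),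
      Cardinal.mk ↥d < κ ∧ U = {y | ∀ i ∈ d, y i = σ i}}

/-- A topological space is `κ`-compact if every open cover has a subcover of size `< κ`. -/
def kappaCompact (κ : Cardinal) {X : Type*} (t : TopologicalSpace X) : Prop :=
  ∀ 𝒰 : Set (Set X), (∀ U ∈ 𝒰, t.IsOpen U) → ⋃₀ 𝒰 = Set.univ →
    ∃ 𝒱 ⊆ 𝒰, Cardinal.mk ↥𝒱 < κ ∧ ⋃₀ 𝒱 = Set.univ

universe u

/-! For `λ < κ`, fix `d ⊆ κ` of size `λ`. The fibres of the restriction map `^κ2 → ^d2` are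
basic open sets of the bounded topology, and they partition `^κ2` into `2^λ` nonempty pieces.
No piece of a partition can be dropped from a cover, so `κ`-compactness forces `2^λ < κ`. -/

theorem kappaCompact.mk_lt_of_surjective {κ : Cardinal} {X Y : Type u} {t : TopologicalSpace X}
    (hcomp : kappaCompact κ t) {g : X → Y} (hg : g.Surjective)
    (hopen : ∀ y, t.IsOpen (g ⁻¹' {y})) : #Y < κ := by
  let fibre : Y → Set X := fun y => g ⁻¹' {y}
  have hcov : ⋃₀ range fibre = Set.univ :=
    eq_univ_of_forall fun x => mem_sUnion.2 ⟨fibre (g x), mem_range_self _, rfl⟩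
  obtain ⟨𝒱, h𝒱, h𝒱card, h𝒱cov⟩ :=
    hcomp (range fibre) (forall_mem_range.2 hopen) hcov
  have hfibres : range fibre ⊆ 𝒱 := by
    rintro _ ⟨y, rfl⟩
    obtain ⟨x, rfl⟩ := hg y
    obtain ⟨V, hV, hxV⟩ := mem_sUnion.1 (h𝒱cov.symm ▸ Set.mem_univ x : x ∈ ⋃₀ 𝒱)
    obtain ⟨y', rfl⟩ := h𝒱 hV
    exact (hxV : g x = y') ▸ hV
  have hinj : fibre.Injective := (preimage_injective.2 hg).comp singleton_injective
  calc #Y = #(range fibre) := (mk_range_eq fibre hinj).symm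
    _ ≤ #𝒱 := mk_le_mk_of_subset hfibres
    _ < κ := h𝒱card

theorem isOpen_domRestrict_preimage_singleton {κ : Cardinal} {d : Set κ.ord.ToType}
    (hd : #d < κ) (f : d → Bool) :
    (boundedTopologyPF κ).IsOpen (d.domRestrict ⁻¹' {f}) := by
  obtain ⟨σ, rfl⟩ := Subtype.surjective_restrict (β := fun _ => Bool) (· ∈ d) f
  refine TopologicalSpace.GenerateOpen.basic _ ⟨d, σ, hd, ?_⟩
  ext y
  simp [funext_iff, Set.domRestrict_apply]

/-- If `κ` is an uncountable regular cardinal and `^κ2` with the bounded topology is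
`κ`-compact, then `κ` is strongly inaccessible. -/
theorem stmt_0 (κ : Cardinal) (hreg : κ.IsRegular) (hunc : ℵ₀ < κ)
    (hcomp : kappaCompact κ (boundedTopologyPF κ)) : κ.IsInaccessible := by
  refine ⟨hunc, hreg.2, fun lam hlam => ?_⟩
  obtain ⟨d, hd⟩ : ∃ d : Set κ.ord.ToType, #d = lam :=
    le_mk_iff_exists_set.1 (by simpa using hlam.le)
  have hlt := hcomp.mk_lt_of_surjective
    (Subtype.surjective_restrict (β := fun _ => Bool) (· ∈ d))
    (isOpen_domRestrict_preimage_singleton (hd ▸ hlam))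
  simpa [hd] using hlt
end

section
/- Let κ be an uncountable cardinal that is singular (cof(κ) < κ). Then the space ^κ2 with the bounded topology admits a partition into at least κ many nonempty clopen sets, and hence is not κ-compact. -/
open Cardinal Set

/-- The bounded topology on `^κ2`, generated by the sets
`N_s = {x : s ⊆ x}` for `s ∈ ^{<κ}2` (initial segments). -/
def boundedTopologySeq (κ : Cardinal) : TopologicalSpace (κ.ord.ToType → Bool) :=
  TopologicalSpace.generateFrom
    {U | ∃ (x : κ.ord.ToType → Bool) (j : κ.ord.ToType), U = {y | ∀ i < j, y i = x i}}

/-!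
Let `λ = cof κ < κ`, fix an initial segment `[0, j₀)` of `κ` of size `λ` and a map `c` from it onto
a cofinal subset of `[j₀, κ)`. For `x ∈ ^κ2` let `a` be the first coordinate below `j₀` where `x`
is `1`, and cut `x` off at `c a` (at `j₀` if there is no such `a`). The truncated sequence
depends only on `x ↾ (c a)`, so it is locally constant, and its fibres form a clopen partition.
For `j₀ ≤ i < c a` the indicator of `{a, i}` is its own truncation, and since `c` is cofinal every
`i ≥ j₀` occurs, giving at least `|[j₀, κ)| = κ` pieces. A partition into nonempty open sets has
no proper subcover, so `^κ2` is not `κ`-compact.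
-/

universe u

section Partition

variable {X : Type u} [t : TopologicalSpace X]

theorem not_kappaCompact_of_partition {κ : Cardinal} {P : Set (Set X)}
    (hne : ∀ U ∈ P, U.Nonempty) (hopen : ∀ U ∈ P, IsOpen U)
    (hdisj : ∀ U ∈ P, ∀ V ∈ P, U ≠ V → U ∩ V = ∅) (hcover : ⋃₀ P = Set.univ) (hκ : κ ≤ #P) :
    ¬ kappaCompact κ t := by
  intro hcompact
  obtain ⟨𝒱, h𝒱P, h𝒱κ, h𝒱cover⟩ := hcompact P hopen hcover
  have hP𝒱 : P ⊆ 𝒱 := by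
    intro U hU
    obtain ⟨x, hxU⟩ := hne U hU
    obtain ⟨V, hV, hxV⟩ := h𝒱cover.ge (mem_univ x)
    obtain rfl : U = V := by
      by_contra hUV
      simpa [hdisj U hU V (h𝒱P hV) hUV] using mem_inter hxU hxV
    exact hV
  exact (hκ.trans (mk_le_mk_of_subset hP𝒱)).not_gt h𝒱κ

theorem IsLocallyConstant.exists_clopen_partition {β : Type u} {f : X → β}
    (hf : IsLocallyConstant f) :
    ∃ P : Set (Set X), (∀ U ∈ P, U.Nonempty ∧ IsOpen U ∧ IsOpen Uᶜ) ∧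
      (∀ U ∈ P, ∀ V ∈ P, U ≠ V → U ∩ V = ∅) ∧ ⋃₀ P = Set.univ ∧ #(range f) ≤ #P := by
  refine ⟨(fun b => f ⁻¹' {b}) '' range f, ?_, ?_, ?_, ?_⟩
  · rintro _ ⟨_, ⟨x, rfl⟩, rfl⟩
    exact ⟨⟨x, rfl⟩, hf.isOpen_fiber (f x), (hf.isClopen_fiber (f x)).compl.isOpen⟩
  · rintro _ ⟨b, -, rfl⟩ _ ⟨b', -, rfl⟩ hbb'
    refine eq_empty_of_forall_notMem fun z ⟨hzb, hzb'⟩ => hbb' ?_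
    rw [← mem_singleton_iff.1 hzb, ← mem_singleton_iff.1 hzb']
  · exact eq_univ_of_forall fun x => ⟨_, ⟨f x, ⟨x, rfl⟩, rfl⟩, rfl⟩
  · refine mk_le_of_injective (f := fun b : range f => ⟨f ⁻¹' {b.1}, mem_image_of_mem _ b.2⟩) ?_
    rintro ⟨_, x, rfl⟩ ⟨b, _⟩ hfib
    have hx : x ∈ f ⁻¹' {b} := by
      rw [← show f ⁻¹' {f x} = f ⁻¹' {b} from congrArg Subtype.val hfib]
      rfl
    exact Subtype.ext hx

end Partition

section Truncation

variable {ι : Type*} [LinearOrder ι]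

def truncAt (j : ι) (x : ι → Bool) : ι → Bool := fun i => if i < j then x i else false

theorem truncAt_congr {j : ι} {x y : ι → Bool} (h : ∀ i < j, y i = x i) :
    truncAt j y = truncAt j x := by
  funext i
  by_cases hi : i < j <;> simp [truncAt, hi, h]

theorem truncAt_eq_self {j : ι} {x : ι → Bool} (h : ∀ i, x i = true → i < j) : truncAt j x = x := by
  funext i
  by_cases hi : i < j
  · simp [truncAt, hi]
  · simpa [truncAt, hi] using mt (h i) hi

variable [WellFoundedLT ι]

open Classical in
noncomputable def cutoff (j₀ : ι) (c : ι → ι) (x : ι → Bool) : ι :=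
  if h : {a | a < j₀ ∧ x a = true}.Nonempty then c (wellFounded_lt.min _ h) else j₀

variable {j₀ : ι} {c : ι → ι}

theorem le_cutoff (hc : ∀ a, j₀ ≤ c a) (x : ι → Bool) : j₀ ≤ cutoff j₀ c x := by
  unfold cutoff
  split_ifs
  exacts [hc _, le_rfl]

theorem cutoff_congr (hc : ∀ a, j₀ ≤ c a) {x y : ι → Bool} (h : ∀ i < cutoff j₀ c x, y i = x i) :
    cutoff j₀ c y = cutoff j₀ c x := by
  have hfirst : {a | a < j₀ ∧ y a = true} = {a | a < j₀ ∧ x a = true} := by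
    ext a
    simp only [mem_ofPred_eq, and_congr_right_iff]
    intro ha
    rw [h a (ha.trans_le (le_cutoff hc x))]
  unfold cutoff
  rw [hfirst]

theorem cutoff_eq {x : ι → Bool} {a : ι} (ha : a < j₀) (hxa : x a = true)
    (hfirst : ∀ b < a, x b = false) : cutoff j₀ c x = c a := by
  have hmem : a ∈ {a | a < j₀ ∧ x a = true} := ⟨ha, hxa⟩
  have hne : {a | a < j₀ ∧ x a = true}.Nonempty := ⟨a, hmem⟩
  have hmin : wellFounded_lt.min _ hne = a := by
    refine le_antisymm (wellFounded_lt.min_le hmem) (not_lt.1 fun hlt => ?_)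
    simpa [hfirst _ hlt] using (wellFounded_lt.min_mem _ hne).2
  rw [cutoff, dif_pos hne, hmin]

noncomputable def truncCutoff (j₀ : ι) (c : ι → ι) (x : ι → Bool) : ι → Bool :=
  truncAt (cutoff j₀ c x) x

theorem truncCutoff_congr (hc : ∀ a, j₀ ≤ c a) {x y : ι → Bool}
    (h : ∀ i < cutoff j₀ c x, y i = x i) : truncCutoff j₀ c y = truncCutoff j₀ c x := by
  rw [truncCutoff, truncCutoff, cutoff_congr hc h, truncAt_congr h]

theorem mk_Ici_le_mk_range_truncCutoff (hc : ∀ a, j₀ ≤ c a) (hcofinal : ∀ i, ∃ a < j₀, i < c a) :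
    #(Ici j₀) ≤ #(range (truncCutoff j₀ c)) := by
  choose a ha hia using hcofinal
  let pair (i : ι) : ι → Bool := fun k => decide (k = a i ∨ k = i)
  have hpair (i : Ici j₀) : truncCutoff j₀ c (pair i) = pair i := by
    have hai : a i < (i : ι) := (ha i).trans_le i.2
    have hcut : cutoff j₀ c (pair i) = c (a i) :=
      cutoff_eq (ha i) (by simp [pair]) fun b hb => by
        simp [pair, hb.ne, (hb.trans hai).ne]
    rw [truncCutoff, hcut]
    refine truncAt_eq_self fun k hk => ?_
    rcases (by simpa [pair] using hk : k = a i ∨ k = i) with rfl | rfl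
    exacts [(ha i).trans_le (hc _), hia _]
  refine mk_le_of_injective (f := fun i : Ici j₀ => ⟨pair i, pair i, hpair i⟩) fun i i' hii' => ?_
  have hi : pair i' i = true := by
    rw [← show pair i = pair i' from congrArg Subtype.val hii']
    simp [pair]
  have hai' : a i' ≠ i := ((ha i').trans_le i.2).ne
  exact Subtype.ext (by simpa [pair, hai'.symm] using hi)

end Truncation

theorem exists_cofinal_map_of_cof_le {ι : Type*} [LinearOrder ι] [NoMaxOrder ι] {j₀ : ι}
    (h : Order.cof ι ≤ #(Iio j₀)) : ∃ c : ι → ι, (∀ a, j₀ ≤ c a) ∧ ∀ i, ∃ a < j₀, i < c a := by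
  obtain ⟨S, hS, hScard⟩ := Order.exists_cof_eq ι
  obtain ⟨e⟩ := hScard.trans_le h
  have : Nonempty S := let ⟨s, hs, _⟩ := hS j₀; ⟨⟨s, hs⟩⟩
  let index (s : S) : ι := e s
  have hindex : Function.Injective index := Subtype.val_injective.comp e.injective
  refine ⟨fun a => max j₀ ((Function.invFun index a : S) : ι), fun a => le_max_left _ _, fun i => ?_⟩
  obtain ⟨i', hii'⟩ := exists_gt i
  obtain ⟨s, hsS, hi's⟩ := hS i'
  refine ⟨index ⟨s, hsS⟩, (e ⟨s, hsS⟩).2, hii'.trans_le (hi's.trans ?_)⟩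
  dsimp only
  rw [Function.leftInverse_invFun hindex]
  exact le_max_right _ _

theorem exists_le_mk_Iio_toType {κ μ : Cardinal} (h : μ < κ) : ∃ j : κ.ord.ToType, μ ≤ #(Iio j) := by
  refine ⟨Ordinal.ToType.mk ⟨μ.ord, ord_lt_ord.2 h⟩, ?_⟩
  have : IsWellOrder κ.ord.ToType (· < ·) := isWellOrder_lt
  have hcard := Ordinal.card_typein (r := (· < ·)) (Ordinal.ToType.mk ⟨μ.ord, ord_lt_ord.2 h⟩)
  rw [← Ordinal.ToType.mk_symm_apply_coe, RelIso.symm_apply_apply, card_ord] at hcard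
  exact hcard.le

theorem mk_Ici_toType {κ : Cardinal} (hκ : ℵ₀ ≤ κ) (j : κ.ord.ToType) : #(Ici j) = κ := by
  have : Infinite κ.ord.ToType := infinite_iff.2 (by simpa using hκ)
  rw [← compl_Iio, mk_compl_of_infinite _ (by simpa using mk_Iio_lt j (by simp))]
  simp

section BoundedTopology

attribute [local instance] boundedTopologySeq

variable {κ : Cardinal}

theorem isLocallyConstant_of_eq_on_cylinder {β : Type*} {f : (κ.ord.ToType → Bool) → β}
    (h : ∀ x, ∃ j, ∀ y, (∀ i < j, y i = x i) → f y = f x) : IsLocallyConstant f := by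
  refine (IsLocallyConstant.iff_eventually_eq f).2 fun x => ?_
  obtain ⟨j, hj⟩ := h x
  have hopen : IsOpen {y : κ.ord.ToType → Bool | ∀ i < j, y i = x i} := .basic _ ⟨x, j, rfl⟩
  exact Filter.eventually_of_mem (hopen.mem_nhds fun _ _ => rfl) hj

end BoundedTopology

/-- If `κ` is an uncountable singular cardinal (`cof κ < κ`), then `^κ2` with the bounded
topology admits a partition into at least `κ` many nonempty clopen sets, and hence is
not `κ`-compact. -/
theorem stmt_2 (κ : Cardinal) (hunc : ℵ₀ < κ) (hsing : κ.ord.cof < κ) :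
    (∃ P : Set (Set (κ.ord.ToType → Bool)),
      (∀ U ∈ P, U.Nonempty ∧ (boundedTopologySeq κ).IsOpen U ∧ (boundedTopologySeq κ).IsOpen Uᶜ) ∧
      (∀ U ∈ P, ∀ V ∈ P, U ≠ V → U ∩ V = ∅) ∧
      ⋃₀ P = Set.univ ∧
      κ ≤ Cardinal.mk ↥P) ∧
    ¬ kappaCompact κ (boundedTopologySeq κ) := by
  let := boundedTopologySeq κ
  have := Cardinal.noMaxOrder hunc.le
  obtain ⟨j₀, hj₀⟩ := exists_le_mk_Iio_toType hsing
  obtain ⟨c, hc, hcofinal⟩ :=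
    exists_cofinal_map_of_cof_le (j₀ := j₀) (by rwa [Ordinal.cof_toType])
  have hf : IsLocallyConstant (truncCutoff j₀ c) :=
    isLocallyConstant_of_eq_on_cylinder fun x => ⟨_, fun _ => truncCutoff_congr hc⟩
  have hκ : κ ≤ #(range (truncCutoff j₀ c)) :=
    (mk_Ici_toType hunc.le j₀).ge.trans (mk_Ici_le_mk_range_truncCutoff hc hcofinal)
  obtain ⟨P, hP, hdisj, hcover, hrange⟩ := hf.exists_clopen_partition
  exact ⟨⟨P, hP, hdisj, hcover, hκ.trans hrange⟩, not_kappaCompact_of_partition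
    (fun U hU => (hP U hU).1) (fun U hU => (hP U hU).2.1) hdisj hcover (hκ.trans hrange)⟩
end

section
/- Let κ be an infinite cardinal with κ^{<κ} = κ, and let X be a Hausdorff topological space whose topology has a basis of size ≤ κ. Then the class of analytic subsets of X (continuous images of closed subsets of ^κκ with the bounded topology) is closed under unions of κ-many sets. -/
open Cardinal Set

/-- The bounded topology on the generalized Baire space `^κκ`, generated by the sets
`N_s = {x : s ⊆ x}` for `s ∈ ^{<κ}κ` (initial segments). -/
def baireTopology (κ : Cardinal) : TopologicalSpace (κ.ord.ToType → κ.ord.ToType) :=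
  TopologicalSpace.generateFrom
    {U | ∃ (x : κ.ord.ToType → κ.ord.ToType) (j : κ.ord.ToType), U = {y | ∀ i < j, y i = x i}}

/-- A subset `A` of a topological space `X` is `κ`-analytic if it is the image of a
closed subset of `^κκ` (with the bounded topology) under a continuous map into `X`. -/
def kAnalytic (κ : Cardinal) {X : Type} (tX : TopologicalSpace X) (A : Set X) : Prop :=
  ∃ (C : Set (κ.ord.ToType → κ.ord.ToType)) (f : (κ.ord.ToType → κ.ord.ToType) → X),
    @IsClosed _ (baireTopology κ) C ∧ @ContinuousOn _ _ (baireTopology κ) tX f C ∧ f '' C = A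

/-!
Split `x ∈ ^κκ` into its head `x ⊥` and its tail `x ∘ succ`. The head is locally constant, the
tail is continuous, and `x ↦ (x ⊥, x ∘ succ)` maps `^κκ` onto `κ × ^κκ`. Hence if `A i = f i '' C i`,
then `⋃ i, A i` is the image of the closed set `{x | x ∘ succ ∈ C (x ⊥)}` under
`x ↦ f (x ⊥) (x ∘ succ)`, which is continuous on it. `κ` being infinite supplies `succ` without a
maximum, so that `⊥ < succ ⊥` and `⊥` is not a successor.
-/

open Topology

section Gluing

variable {Y Z X β : Type*} [TopologicalSpace Y] [TopologicalSpace Z] [TopologicalSpace X]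
  {h : Y → β} {g : Y → Z} {C : β → Set Z}

theorem IsLocallyConstant.isClosed_setOf_mem (hh : IsLocallyConstant h) (hg : Continuous g)
    (hC : ∀ v, IsClosed (C v)) : IsClosed {y | g y ∈ C (h y)} := by
  refine isOpen_compl_iff.1 (isOpen_iff_mem_nhds.2 fun y hy => ?_)
  filter_upwards [hh.eventually_eq y,
    hg.continuousAt.preimage_mem_nhds ((hC (h y)).isOpen_compl.mem_nhds hy)] with y' hhy' hgy'
  simpa [hhy'] using hgy'

theorem IsLocallyConstant.continuousOn_setOf_mem (hh : IsLocallyConstant h) (hg : Continuous g)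
    {f : β → Z → X} (hf : ∀ v, ContinuousOn (f v) (C v)) :
    ContinuousOn (fun y => f (h y) (g y)) {y | g y ∈ C (h y)} := by
  intro y hy
  have hfiber : ∀ᶠ y' in 𝓝[{y | g y ∈ C (h y)}] y, h y' = h y :=
    nhdsWithin_le_nhds (hh.eventually_eq y)
  have hpre : g ⁻¹' C (h y) ∈ 𝓝[{y | g y ∈ C (h y)}] y := by
    filter_upwards [hfiber, self_mem_nhdsWithin] with y' hhy' hy'
    rwa [← hhy']
  refine ((((hf (h y)).continuousWithinAt hy).comp hg.continuousWithinAt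
    (mapsTo_preimage _ _)).mono_of_mem_nhdsWithin hpre).congr_of_eventuallyEq ?_ rfl
  filter_upwards [hfiber] with y' hhy'
  simp [hhy']

end Gluing

theorem image_setOf_mem_eq_iUnion {Y Z X β : Type*} {h : Y → β} {g : Y → Z} {C : β → Set Z}
    (hsurj : Function.Surjective fun y => (h y, g y))
    (f : β → Z → X) : (fun y => f (h y) (g y)) '' {y | g y ∈ C (h y)} = ⋃ v, f v '' C v := by
  ext a
  simp only [mem_image, mem_iUnion]
  constructor
  · rintro ⟨y, hy, rfl⟩
    exact ⟨h y, g y, hy, rfl⟩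
  · rintro ⟨v, z, hz, rfl⟩
    obtain ⟨y, hy⟩ := hsurj (v, z)
    obtain ⟨rfl, rfl⟩ := Prod.mk.inj hy
    exact ⟨y, hz, rfl⟩

theorem Function.surjective_apply_prod_comp {ι ι' β : Type*} {s : ι' → ι}
    (hs : Function.Injective s) {b : ι} (hb : b ∉ range s) :
    Function.Surjective fun x : ι → β => (x b, x ∘ s) := fun ⟨v, z⟩ =>
  ⟨Function.extend s z fun _ => v,
    by simp [Function.extend_apply' _ _ _ hb, Function.extend_comp hs]⟩

section BoundedTopology

variable {ι β : Type*} [Preorder ι]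

def cylinder (x : ι → β) (j : ι) : Set (ι → β) := {y | ∀ i < j, y i = x i}

@[reducible] def boundedTopology (ι β : Type*) [Preorder ι] : TopologicalSpace (ι → β) :=
  .generateFrom {U | ∃ x j, U = cylinder x j}

attribute [local instance] boundedTopology

theorem isOpen_cylinder (x : ι → β) (j : ι) : IsOpen (cylinder x j) :=
  .basic _ ⟨x, j, rfl⟩

theorem isOpen_of_forall_cylinder_subset {U : Set (ι → β)}
    (hU : ∀ x ∈ U, ∃ j, cylinder x j ⊆ U) : IsOpen U :=
  isOpen_iff_forall_mem_open.2 fun x hx =>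
    let ⟨j, hj⟩ := hU x hx
    ⟨cylinder x j, hj, isOpen_cylinder x j, fun _ _ => rfl⟩

theorem isLocallyConstant_eval {b j : ι} (hbj : b < j) :
    IsLocallyConstant fun x : ι → β => x b := fun V =>
  isOpen_of_forall_cylinder_subset fun x hx => ⟨j, fun y hy => by
    simpa only [mem_preimage, hy b hbj] using hx⟩

theorem continuous_comp_strictMono {ι' : Type*} [Preorder ι'] {s : ι' → ι} (hs : StrictMono s) :
    Continuous fun x : ι → β => x ∘ s := by
  refine continuous_generateFrom_iff.2 ?_
  rintro _ ⟨z, j, rfl⟩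
  exact isOpen_of_forall_cylinder_subset fun x hx =>
    ⟨s j, fun y hy i hi => (hy (s i) (hs hi)).trans (hx i hi)⟩

end BoundedTopology

theorem stmt_4_general (κ : Cardinal) (hinf : ℵ₀ ≤ κ)
    (X : Type) [tX : TopologicalSpace X]
    (A : κ.ord.ToType → Set X) (hA : ∀ i, kAnalytic κ tX (A i)) :
    kAnalytic κ tX (⋃ i, A i) := by
  -- `baireTopology κ` is `boundedTopology κ.ord.ToType κ.ord.ToType` by unfolding.
  let := baireTopology κ
  have := Cardinal.noMaxOrder hinf
  have := nonempty_ord_toType (aleph0_pos.trans_le hinf).ne'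
  let : OrderBot κ.ord.ToType := WellFoundedLT.toOrderBot _
  choose C f hC hf hCf using hA
  have hhead := isLocallyConstant_eval (β := κ.ord.ToType) (Order.bot_lt_succ (⊥ : κ.ord.ToType))
  have htail := continuous_comp_strictMono (β := κ.ord.ToType)
    (Order.succ_strictMono (α := κ.ord.ToType))
  have hsurj := Function.surjective_apply_prod_comp (β := κ.ord.ToType)
    (Order.succ_strictMono (α := κ.ord.ToType)).injective
    (by rintro ⟨t, ht⟩; exact (Order.bot_lt_succ t).ne' ht)
  refine ⟨_, _, hhead.isClosed_setOf_mem htail hC, hhead.continuousOn_setOf_mem htail hf, ?_⟩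
  rw [image_setOf_mem_eq_iUnion hsurj]
  simp only [hCf]

/-- For `κ` infinite with `κ^{<κ} = κ` and `X` a Hausdorff space with a basis of size
`≤ κ`, the analytic subsets of `X` are closed under unions of `κ`-many sets. -/
theorem stmt_4 (κ : Cardinal) (hinf : ℵ₀ ≤ κ) (hκ : κ ^< κ = κ)
    (X : Type) [tX : TopologicalSpace X] [T2Space X]
    (hbasis : ∃ B : Set (Set X), Cardinal.mk ↥B ≤ κ ∧ TopologicalSpace.IsTopologicalBasis B)
    (A : κ.ord.ToType → Set X) (hA : ∀ i, kAnalytic κ tX (A i)) :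
    kAnalytic κ tX (⋃ i, A i) :=
  stmt_4_general κ hinf X (tX := tX) A hA
end

section
/- Let κ be an infinite cardinal with κ^{<κ} = κ, and let X be a Hausdorff topological space with a basis of size ≤ κ. Then the class of analytic subsets of X is closed under intersections of κ-many sets. -/
open Cardinal Set

/-
Since `κ < κ ^ cf κ`, the hypothesis `κ^{<κ} = κ` forces `κ` to be regular. Hence precomposition
with any map `κ → κ` is continuous for the bounded topology: the first `j` coordinates of `x ∘ g`
only depend on `< κ` coordinates of `x`, and these lie below some `j' < κ`. Splitting `κ` into
`κ` disjoint copies of itself via a bijection `κ ≃ κ × κ`, `^κκ` becomes the product of `κ`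
copies of itself. If `A i = f i '' C i`, the set of `x` whose `i`-th slice lies in `C i` for
every `i` and on which all the `f i` agree is closed, because the diagonal of `X` is closed, and
its image under any one of the `f i` is `⋂ i, A i`.
-/

open Topology

lemma le_cof_ord_of_powerlt_eq_self {κ : Cardinal} (hinf : ℵ₀ ≤ κ) (hκ : κ ^< κ = κ) :
    κ ≤ κ.ord.cof := by
  by_contra! hcof
  exact ((lt_power_cof_ord hinf).trans_le (le_powerlt κ hcof)).ne hκ.symm

lemma Ordinal.exists_forall_lt_of_mk_lt_cof {o : Ordinal} {S : Set o.ToType} (hS : #S < o.cof) :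
    ∃ j, ∀ i ∈ S, i < j :=
  not_isCofinal_iff.mp fun hcof => (Order.cof_le hcof).not_gt (by rwa [Ordinal.cof_toType])

lemma isOpen_setOf_eqOn_baireTopology {κ : Cardinal} (hreg : κ ≤ κ.ord.cof)
    {S : Set κ.ord.ToType} (hS : #S < κ) (v : κ.ord.ToType → κ.ord.ToType) :
    IsOpen[baireTopology κ] {x | EqOn x v S} := by
  let := baireTopology κ
  obtain ⟨j, hj⟩ := Ordinal.exists_forall_lt_of_mk_lt_cof (hS.trans_le hreg)
  refine isOpen_iff_forall_mem_open.mpr fun y hy => ⟨{x | ∀ i < j, x i = y i}, ?_, ?_, ?_⟩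
  · exact fun x hx i hi => (hx i (hj i hi)).trans (hy hi)
  · exact TopologicalSpace.isOpen_generateFrom_of_mem ⟨y, j, rfl⟩
  · exact fun _ _ => rfl

lemma continuous_comp_right_baireTopology {κ : Cardinal} (hreg : κ ≤ κ.ord.cof)
    (g : κ.ord.ToType → κ.ord.ToType) :
    Continuous[baireTopology κ, baireTopology κ] fun x => x ∘ g := by
  let := baireTopology κ
  refine continuous_generateFrom_iff.mpr ?_
  rintro _ ⟨z, j, rfl⟩
  refine isOpen_iff_forall_mem_open.mpr fun x hx => ⟨{y | EqOn y x (g '' Iio j)}, ?_, ?_, ?_⟩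
  · exact fun y hy i hi => (hy (mem_image_of_mem g hi)).trans (hx i hi)
  · have hIio : #(Iio j) < κ := by simpa using mk_Iio_lt j (by simp)
    exact isOpen_setOf_eqOn_baireTopology hreg (mk_image_le.trans_lt hIio) x
  · exact fun _ _ => rfl

lemma exists_isClosed_continuousOn_image_eq_iInter {B Y X I : Type*} [TopologicalSpace B]
    [TopologicalSpace Y] [TopologicalSpace X] [T2Space X] [Nonempty I]
    (π : I → B → Y) (hπ : ∀ i, Continuous (π i)) (hπ_surj : ∀ w : I → Y, ∃ x, ∀ i, π i x = w i)
    {C : I → Set Y} (hC : ∀ i, IsClosed (C i)) {f : I → Y → X}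
    (hf : ∀ i, ContinuousOn (f i) (C i)) :
    ∃ (D : Set B) (g : B → X), IsClosed D ∧ ContinuousOn g D ∧ g '' D = ⋂ i, f i '' C i := by
  obtain ⟨i₀⟩ := ‹Nonempty I›
  set P := ⋂ i, π i ⁻¹' C i
  have hP : IsClosed P := isClosed_iInter fun i => (hC i).preimage (hπ i)
  have hfπ : ∀ i, ContinuousOn (f i ∘ π i) P := fun i =>
    (hf i).comp (hπ i).continuousOn fun x hx => mem_iInter.mp hx i
  set D := ⋂ i, {x ∈ P | f i (π i x) = f i₀ (π i₀ x)}
  have hDP : D ⊆ P := fun x hx => (mem_iInter.mp hx i₀).1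
  refine ⟨D, f i₀ ∘ π i₀, isClosed_iInter fun i => hP.isClosed_eq (hfπ i) (hfπ i₀),
    (hfπ i₀).mono hDP, Subset.antisymm ?_ ?_⟩
  · rintro _ ⟨x, hx, rfl⟩
    exact mem_iInter.mpr fun i =>
      ⟨π i x, mem_iInter.mp (hDP hx) i, (mem_iInter.mp hx i).2⟩
  · intro y hy
    choose w hw hwy using mem_iInter.mp hy
    obtain ⟨x, hx⟩ := hπ_surj w
    have hxP : x ∈ P := mem_iInter.mpr fun i => by simpa [hx i] using hw i
    refine ⟨x, mem_iInter.mpr fun i => ⟨hxP, ?_⟩, ?_⟩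
    · simp only [hx, hwy]
    · simp only [Function.comp_apply, hx, hwy]

theorem stmt_5_general (κ : Cardinal) (hinf : ℵ₀ ≤ κ) (hκ : κ ^< κ = κ)
    (X : Type) [tX : TopologicalSpace X] [T2Space X]
    (A : κ.ord.ToType → Set X) (hA : ∀ i, kAnalytic κ tX (A i)) :
    kAnalytic κ tX (⋂ i, A i) := by
  let := baireTopology κ
  have hreg := le_cof_ord_of_powerlt_eq_self hinf hκ
  have : Nonempty κ.ord.ToType :=
    mk_ne_zero_iff.mp (by rw [mk_ord_toType]; exact (aleph0_pos.trans_le hinf).ne')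
  obtain ⟨e⟩ : Nonempty (κ.ord.ToType ≃ κ.ord.ToType × κ.ord.ToType) := by
    rw [← Cardinal.eq, mk_prod, mk_ord_toType, lift_id, mul_eq_self hinf]
  choose C f hC hf hCf using hA
  obtain ⟨D, g, hD, hg, hgD⟩ := exists_isClosed_continuousOn_image_eq_iInter
    (fun i x => x ∘ fun α => e.symm (i, α)) (fun i => continuous_comp_right_baireTopology hreg _)
    (fun w => ⟨fun β => w (e β).1 (e β).2, fun i => by ext α; simp⟩) hC hf
  exact ⟨D, g, hD, hg, by simp only [hgD, hCf]⟩

/-- For `κ` infinite with `κ^{<κ} = κ` and `X` a Hausdorff space with a basis of size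
`≤ κ`, the analytic subsets of `X` are closed under intersections of `κ`-many sets. -/
theorem stmt_5 (κ : Cardinal) (hinf : ℵ₀ ≤ κ) (hκ : κ ^< κ = κ)
    (X : Type) [tX : TopologicalSpace X] [T2Space X]
    (hbasis : ∃ B : Set (Set X), Cardinal.mk ↥B ≤ κ ∧ TopologicalSpace.IsTopologicalBasis B)
    (A : κ.ord.ToType → Set X) (hA : ∀ i, kAnalytic κ tX (A i)) :
    kAnalytic κ tX (⋂ i, A i) :=
  stmt_5_general κ hinf hκ X (tX := tX) A hA
end

section
/- Let κ be an uncountable cardinal and define ⊕ : ^{≤κ}(κ×κ) → ^{≤κ}κ by recursion on length: ∅⊕∅ = ∅; ⟨α⟩⊕⟨β⟩ = ⟨ρ(α,β)⟩; for successor length γ'+1 > 1, (s ⊕ t) = (s↾γ' ⊕ t↾γ') ⌢ ⟨ρ(sup_{α≤γ'} s(α) + ω, ρ(s(γ'), t(γ')))⟩; and unions at limits, where ρ(α,β) = Hess(α,β)+1 with Hess the Hessenberg pairing. Then ⊕ is injective. -/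
open Cardinal Ordinal Set

/-- Any length-preserving map `⊕ : ^{≤κ}(κ×κ) → ^{≤κ}κ` satisfying the defining recursion
(`∅⊕∅ = ∅`; `⟨α⟩⊕⟨β⟩ = ⟨ρ(α,β)⟩`; at successor lengths `γ'+1 > 1` the last value is
`ρ(sup_{α≤γ'} s(α) + ω, ρ(s(γ'), t(γ')))` on top of the `⊕` of the restrictions; unions
at limits, i.e. compatibility with restrictions), where `ρ(α,β) = Hess(α,β) + 1` with
`Hess` the Hessenberg pairing, is injective. -/
theorem stmt_9 (κ : Cardinal) (hunc : ℵ₀ < κ)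
    (c : Ordinal → Ordinal → Ordinal)
    (hc : ∀ α β α' β' : Ordinal, c α β ≤ c α' β' ↔
      (max α β < max α' β' ∨
        (max α β = max α' β' ∧ (α < α' ∨ (α = α' ∧ β ≤ β')))))
    (hsurj : Function.Surjective (fun p : Ordinal × Ordinal => c p.1 p.2))
    (oplus : ∀ γ : Ordinal, (↥(Set.Iio γ) → Ordinal × Ordinal) → (↥(Set.Iio γ) → Ordinal))
    -- compatibility with restrictions (Lipschitz/monotone; in particular unions at limits)
    (hrestrict : ∀ (γ γ' : Ordinal) (h : γ' ≤ γ) (p : ↥(Set.Iio γ) → Ordinal × Ordinal)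
        (i : ↥(Set.Iio γ')),
      oplus γ' (fun j => p ⟨j.1, lt_of_lt_of_le j.2 h⟩) i = oplus γ p ⟨i.1, lt_of_lt_of_le i.2 h⟩)
    -- ⟨α⟩ ⊕ ⟨β⟩ = ⟨ρ(α,β)⟩
    (hone : ∀ (p : ↥(Set.Iio (1 : Ordinal)) → Ordinal × Ordinal) (i : ↥(Set.Iio (1 : Ordinal))),
      oplus 1 p i = c (p i).1 (p i).2 + 1)
    -- successor step for length γ+1 with γ ≠ 0
    (hsucc : ∀ (γ : Ordinal), γ ≠ 0 → ∀ (p : ↥(Set.Iio (γ + 1)) → Ordinal × Ordinal)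
        (i : ↥(Set.Iio (γ + 1))), (i : Ordinal) = γ →
      oplus (γ + 1) p i =
        c ((⨆ j : ↥(Set.Iio (γ + 1)), (p j).1) + Ordinal.omega0)
          (c (p i).1 (p i).2 + 1) + 1) :
    ∀ (γ : Ordinal), γ ≤ κ.ord → ∀ p q : ↥(Set.Iio γ) → Ordinal × Ordinal,
      (∀ i, (p i).1 < κ.ord ∧ (p i).2 < κ.ord) → (∀ i, (q i).1 < κ.ord ∧ (q i).2 < κ.ord) →
      oplus γ p = oplus γ q → p = q := by

  -- c is injective as a map on pairs
  have addone : ∀ a b : Ordinal, a + 1 = b + 1 → a = b := by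
    intro a b h
    rwa [Ordinal.add_one_eq_succ, Ordinal.add_one_eq_succ, Order.succ_eq_succ_iff] at h
  have cinj : ∀ a b a' b' : Ordinal, c a b = c a' b' → a = a' ∧ b = b' := by
    intro a b a' b' h
    have h1 := (hc a b a' b').mp h.le
    have h2 := (hc a' b' a b).mp h.ge
    rcases h1 with hm | ⟨hm, ha⟩
    · rcases h2 with hm' | ⟨hm', _⟩
      · exact absurd (hm.trans hm') (lt_irrefl _)
      · exact absurd (hm'.symm ▸ hm) (lt_irrefl _)
    · rcases h2 with hm' | ⟨hm', ha'⟩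
      · exact absurd (hm ▸ hm') (lt_irrefl _)
      · rcases ha with hlt | ⟨hae, hbe⟩
        · rcases ha' with hlt' | ⟨hae', _⟩
          · exact absurd (hlt.trans hlt') (lt_irrefl _)
          · exact absurd (hae' ▸ hlt) (lt_irrefl _)
        · rcases ha' with hlt' | ⟨_, hbe'⟩
          · exact absurd (hae ▸ hlt') (lt_irrefl _)
          · exact ⟨hae, le_antisymm hbe hbe'⟩
  intro γ _ p q _ _ heq
  funext i
  have hi1 : (i : Ordinal) + 1 ≤ γ := by
    rw [Ordinal.add_one_eq_succ, Order.succ_le_iff]; exact i.2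
  have hilt : (i : Ordinal) < (i : Ordinal) + 1 := by
    rw [Ordinal.add_one_eq_succ]; exact Order.lt_succ _
  set pr : ↥(Set.Iio ((i : Ordinal) + 1)) → Ordinal × Ordinal :=
    fun j => p ⟨j.1, lt_of_lt_of_le j.2 hi1⟩ with hprdef
  set qr : ↥(Set.Iio ((i : Ordinal) + 1)) → Ordinal × Ordinal :=
    fun j => q ⟨j.1, lt_of_lt_of_le j.2 hi1⟩ with hqrdef
  have hkey : oplus ((i : Ordinal) + 1) pr ⟨i, hilt⟩ = oplus ((i : Ordinal) + 1) qr ⟨i, hilt⟩ := by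
    rw [hrestrict γ ((i : Ordinal) + 1) hi1 p ⟨i, hilt⟩,
        hrestrict γ ((i : Ordinal) + 1) hi1 q ⟨i, hilt⟩]
    exact congrFun heq _
  have hpi : pr ⟨i, hilt⟩ = p i := rfl
  have hqi : qr ⟨i, hilt⟩ = q i := rfl
  by_cases hi0 : (i : Ordinal) = 0
  · -- length-1 case
    have h1le : (1 : Ordinal) ≤ γ := by simpa [hi0] using hi1
    have h01 : (0 : Ordinal) < 1 := zero_lt_one
    have hieq : i = ⟨(0 : Ordinal), lt_of_lt_of_le h01 h1le⟩ := Subtype.ext hi0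
    have hp1 := hrestrict γ 1 h1le p ⟨0, h01⟩
    have hq1 := hrestrict γ 1 h1le q ⟨0, h01⟩
    rw [hone] at hp1 hq1
    have : c (p ⟨0, lt_of_lt_of_le h01 h1le⟩).1 (p ⟨0, lt_of_lt_of_le h01 h1le⟩).2 + 1 =
        c (q ⟨0, lt_of_lt_of_le h01 h1le⟩).1 (q ⟨0, lt_of_lt_of_le h01 h1le⟩).2 + 1 := by
      rw [hp1, hq1]; exact congrFun heq _
    have hcc := cinj _ _ _ _ (addone _ _ this)
    rw [hieq]
    exact Prod.ext hcc.1 hcc.2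
  · -- successor case
    rw [hsucc (i : Ordinal) hi0 pr ⟨i, hilt⟩ rfl,
        hsucc (i : Ordinal) hi0 qr ⟨i, hilt⟩ rfl] at hkey
    have h1 := addone _ _ hkey
    have h2 := cinj _ _ _ _ h1
    have h3 := cinj _ _ _ _ (addone _ _ h2.2)
    rw [hpi, hqi] at h3
    exact Prod.ext h3.1 h3.2
end

section
/- Let κ be regular uncountable and assume 2^{ℵ0} ≥ 2 and there is a family ⟨X_r : r ∈ ^λ2⟩ (λ < κ regular) of pairwise non-embeddable structures in a countable relational language, of size λ each, with the 'fullness' property that every element stands in relation with some other element. For A ≠ A' ⊆ ^λ2, the sets O_A and O_{A'} (unions over r ∈ A of the isomorphism-closures of the basic open sets of codes of X_r in the space of κ-sized structures) are distinct. Hence there are 2^{2^λ} many open, isomorphism-invariant subsets of the space of κ-sized L-structures with the bounded topology. -/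
/-!
A full structure has no isolated points, so a copy of `X s` sitting inside `X r` padded with
isolated points must avoid the padding; it is therefore an embedding of `X s` into `X r`, which
forces `s = r`. Hence the padded `X r` lies in `O_A` exactly when `r ∈ A`, and `A ↦ O_A` is
injective. Each `O_A` is open because relabelling by a permutation is continuous for the bounded
topology and the code of a structure of size `< κ` is a basic open condition.
-/

open Cardinal Set

/-- The bounded topology on `Mod^κ_L ≅ ^{κ×κ}2`, generated by the sets determined by
partial functions with domain of size `< κ`. -/
def modTopology (κ : Cardinal) : TopologicalSpace (κ.ord.ToType → κ.ord.ToType → Bool) :=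
  TopologicalSpace.generateFrom
    {U | ∃ (d : Set (κ.ord.ToType × κ.ord.ToType)) (σ : κ.ord.ToType → κ.ord.ToType → Bool),
      Cardinal.mk ↥d < κ ∧ U = {x | ∀ p ∈ d, x p.1 p.2 = σ p.1 p.2}}

/-- Isomorphism of coded graph structures on `κ`, via a permutation of `κ`. -/
def modIso (κ : Cardinal) (x y : κ.ord.ToType → κ.ord.ToType → Bool) : Prop :=
  ∃ p : κ.ord.ToType ≃ κ.ord.ToType, ∀ a b : κ.ord.ToType, y (p a) (p b) = x a b

open Topology

section Structures

variable {α β : Type*}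

def IsFull (x : α → α → Bool) : Prop :=
  ∀ a, ∃ b, x a b = true ∨ x b a = true

def Embeds (x y : α → α → Bool) : Prop :=
  ∃ f : α → α, Function.Injective f ∧ ∀ a b, y (f a) (f b) = x a b

/-- `x` transported along `e`, with every point outside the range of `e` isolated. -/
noncomputable def padIsolated (e : α → β) (x : α → α → Bool) (u v : β) : Bool :=
  Function.extend (Prod.map e e) (Function.uncurry x) (fun _ => false) (u, v)

/-- The basic open set `N_t` of the code `t` of `x` placed along `e`. -/
def codeSet (e : α → β) (x : α → α → Bool) : Set (β → β → Bool) :=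
  {y | ∀ a b, y (e a) (e b) = x a b}

variable {e : α → β}

lemma padIsolated_apply (he : Function.Injective e) (x : α → α → Bool) (a b : α) :
    padIsolated e x (e a) (e b) = x a b :=
  (he.prodMap he).extend_apply _ _ (a, b)

lemma padIsolated_mem_codeSet (he : Function.Injective e) (x : α → α → Bool) :
    padIsolated e x ∈ codeSet e x :=
  padIsolated_apply he x

lemma mem_range_of_padIsolated_eq_true {x : α → α → Bool} {u v : β}
    (h : padIsolated e x u v = true) : u ∈ range e ∧ v ∈ range e := by
  by_contra hout
  have hfalse : padIsolated e x u v = false := Function.extend_apply' _ _ (u, v) <| by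
    rintro ⟨⟨a, b⟩, hab⟩
    exact hout ⟨⟨a, congrArg Prod.fst hab⟩, ⟨b, congrArg Prod.snd hab⟩⟩
  simp [hfalse] at h

lemma IsFull.embeds_of_padIsolated {x y : α → α → Bool} (hx : IsFull x)
    (he : Function.Injective e) {g : α → β} (hg : Function.Injective g)
    (h : ∀ a b, padIsolated e y (g a) (g b) = x a b) : Embeds x y := by
  have hrange : ∀ a, g a ∈ range e := fun a => by
    obtain ⟨b, hb | hb⟩ := hx a
    · exact (mem_range_of_padIsolated_eq_true ((h a b).trans hb)).1
    · exact (mem_range_of_padIsolated_eq_true ((h b a).trans hb)).2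
  choose f hf using hrange
  have hef : e ∘ f = g := funext hf
  refine ⟨f, Function.Injective.of_comp (f := e) (hef ▸ hg), fun a b => ?_⟩
  rw [← padIsolated_apply he y, hf, hf, h]

end Structures

section Bounded

variable {κ : Cardinal}

lemma modIso_refl (x : κ.ord.ToType → κ.ord.ToType → Bool) : modIso κ x x :=
  ⟨Equiv.refl _, fun _ _ => rfl⟩

lemma modIso.symm {x y : κ.ord.ToType → κ.ord.ToType → Bool} (h : modIso κ x y) :
    modIso κ y x := by
  obtain ⟨p, hp⟩ := h
  exact ⟨p.symm, fun a b => by rw [← hp, p.apply_symm_apply, p.apply_symm_apply]⟩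

lemma modIso.trans {x y z : κ.ord.ToType → κ.ord.ToType → Bool} (hxy : modIso κ x y)
    (hyz : modIso κ y z) : modIso κ x z := by
  obtain ⟨p, hp⟩ := hxy
  obtain ⟨q, hq⟩ := hyz
  exact ⟨p.trans q, fun a b => by simp only [Equiv.trans_apply, hq, hp]⟩

/-- The relabelling `j_p` of structures along a permutation `p` (up to replacing `p` by `p⁻¹`). -/
def relabel (p : κ.ord.ToType ≃ κ.ord.ToType) (x : κ.ord.ToType → κ.ord.ToType → Bool)
    (u v : κ.ord.ToType) : Bool :=
  x (p u) (p v)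

lemma continuous_relabel (p : κ.ord.ToType ≃ κ.ord.ToType) :
    Continuous[modTopology κ, modTopology κ] (relabel p) := by
  refine continuous_generateFrom_iff.2 ?_
  rintro _ ⟨d, σ, hd, rfl⟩
  refine TopologicalSpace.isOpen_generateFrom_of_mem
    ⟨Prod.map p p '' d, fun u v => σ (p.symm u) (p.symm v), mk_image_le.trans_lt hd, ?_⟩
  ext x
  simp only [relabel, mem_preimage, mem_ofPred_eq, forall_mem_image, Prod.map_fst, Prod.map_snd,
    Equiv.symm_apply_apply]

def isoClosure (κ : Cardinal) (S : Set (κ.ord.ToType → κ.ord.ToType → Bool)) :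
    Set (κ.ord.ToType → κ.ord.ToType → Bool) :=
  {y | ∃ x ∈ S, modIso κ x y}

lemma isoClosure_eq_iUnion_preimage (S : Set (κ.ord.ToType → κ.ord.ToType → Bool)) :
    isoClosure κ S = ⋃ p, relabel p ⁻¹' S := by
  ext y
  simp only [isoClosure, modIso, mem_ofPred_eq, mem_iUnion, mem_preimage]
  constructor
  · rintro ⟨x, hx, p, hp⟩
    exact ⟨p, by convert hx using 2; funext a b; exact hp a b⟩
  · rintro ⟨p, hp⟩
    exact ⟨_, hp, p, fun _ _ => rfl⟩

lemma isOpen_isoClosure {S : Set (κ.ord.ToType → κ.ord.ToType → Bool)}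
    (hS : IsOpen[modTopology κ] S) : IsOpen[modTopology κ] (isoClosure κ S) := by
  let _ := modTopology κ
  rw [isoClosure_eq_iUnion_preimage]
  exact isOpen_iUnion fun p => (continuous_relabel p).isOpen_preimage S hS

lemma mem_isoClosure_iff_of_modIso (S : Set (κ.ord.ToType → κ.ord.ToType → Bool))
    {x y : κ.ord.ToType → κ.ord.ToType → Bool} (hxy : modIso κ x y) :
    x ∈ isoClosure κ S ↔ y ∈ isoClosure κ S :=
  ⟨fun ⟨z, hz, hzx⟩ => ⟨z, hz, hzx.trans hxy⟩, fun ⟨z, hz, hzy⟩ => ⟨z, hz, hzy.trans hxy.symm⟩⟩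

variable {ι : Type*} {α : Type _} {e : α → κ.ord.ToType}

lemma isOpen_codeSet (hα : #(α × α) < κ) (he : Function.Injective e) (x : α → α → Bool) :
    IsOpen[modTopology κ] (codeSet e x) := by
  refine TopologicalSpace.isOpen_generateFrom_of_mem
    ⟨range (Prod.map e e), padIsolated e x, mk_range_le.trans_lt hα, ?_⟩
  ext y
  simp only [codeSet, mem_ofPred_eq, forall_mem_range, Prod.forall, Prod.map_apply,
    padIsolated_apply he]

/-- The set `O_A`. -/
def codeUnion (κ : Cardinal) (e : α → κ.ord.ToType) (X : ι → α → α → Bool) (A : Set ι) :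
    Set (κ.ord.ToType → κ.ord.ToType → Bool) :=
  isoClosure κ (⋃ r ∈ A, codeSet e (X r))

lemma codeUnion_eq_setOf (X : ι → α → α → Bool) (A : Set ι) :
    codeUnion κ e X A = {y | ∃ r ∈ A, ∃ x : κ.ord.ToType → κ.ord.ToType → Bool,
      (∀ a b : α, x (e a) (e b) = X r a b) ∧ modIso κ x y} := by
  ext y
  simp only [codeUnion, isoClosure, codeSet, mem_iUnion, mem_ofPred_eq, exists_prop]
  grind

variable {X : ι → α → α → Bool}

lemma padIsolated_mem_codeUnion_iff (hfull : ∀ r, IsFull (X r))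
    (hnonemb : ∀ r s, r ≠ s → ¬ Embeds (X r) (X s)) (he : Function.Injective e)
    (r : ι) (A : Set ι) : padIsolated e (X r) ∈ codeUnion κ e X A ↔ r ∈ A := by
  refine ⟨?_, fun hr => ⟨_, mem_biUnion hr (padIsolated_mem_codeSet he _), modIso_refl _⟩⟩
  rintro ⟨x, hx, p, hp⟩
  obtain ⟨s, hs, hxs⟩ := mem_iUnion₂.1 hx
  have hemb : Embeds (X s) (X r) :=
    (hfull s).embeds_of_padIsolated he (p.injective.comp he) fun a b => (hp _ _).trans (hxs a b)
  by_contra hrA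
  exact hnonemb s r (ne_of_mem_of_not_mem hs hrA) hemb

lemma codeUnion_injective (hfull : ∀ r, IsFull (X r))
    (hnonemb : ∀ r s, r ≠ s → ¬ Embeds (X r) (X s)) (he : Function.Injective e) :
    Function.Injective (codeUnion κ e X) := fun A A' h => by
  ext r
  rw [← padIsolated_mem_codeUnion_iff hfull hnonemb he, h,
    padIsolated_mem_codeUnion_iff hfull hnonemb he]

end Bounded

theorem stmt_17_general (κ ν : Cardinal)
    (hνinf : ℵ₀ ≤ ν) (hνκ : ν < κ)
    (X : (ν.ord.ToType → Bool) → ν.ord.ToType → ν.ord.ToType → Bool)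
    (hfull : ∀ r a, ∃ b, X r a b = true ∨ X r b a = true)
    (hnonemb : ∀ r s, r ≠ s →
      ¬ ∃ f : ν.ord.ToType → ν.ord.ToType, Function.Injective f ∧
        ∀ a b, X s (f a) (f b) = X r a b)
    (e : ν.ord.ToType → κ.ord.ToType) (he : Function.Injective e) :
    (∀ A A' : Set (ν.ord.ToType → Bool), A ≠ A' →
      {y : κ.ord.ToType → κ.ord.ToType → Bool | ∃ r ∈ A,
          ∃ x : κ.ord.ToType → κ.ord.ToType → Bool,
            (∀ a b : ν.ord.ToType, x (e a) (e b) = X r a b) ∧ modIso κ x y} ≠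
      {y : κ.ord.ToType → κ.ord.ToType → Bool | ∃ r ∈ A',
          ∃ x : κ.ord.ToType → κ.ord.ToType → Bool,
            (∀ a b : ν.ord.ToType, x (e a) (e b) = X r a b) ∧ modIso κ x y}) ∧
    (∃ F : Set (Set (κ.ord.ToType → κ.ord.ToType → Bool)),
      Cardinal.mk ↥F = (2 : Cardinal) ^ ((2 : Cardinal) ^ ν) ∧
      ∀ U ∈ F, (modTopology κ).IsOpen U ∧
        ∀ x y, modIso κ x y → (x ∈ U ↔ y ∈ U)) := by
  have hsmall : #(ν.ord.ToType × ν.ord.ToType) < κ := by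
    rwa [mk_prod, lift_id, mk_ord_toType, mul_eq_self hνinf]
  have hinj := codeUnion_injective hfull hnonemb he (κ := κ)
  simp only [← codeUnion_eq_setOf]
  refine ⟨fun A A' hne h => hne (hinj h), range (codeUnion κ e X), ?_, ?_⟩
  · rw [mk_range_eq _ hinj, mk_set, mk_arrow, mk_ord_toType]
    simp
  · rintro _ ⟨A, rfl⟩
    let _ := modTopology κ
    exact ⟨isOpen_isoClosure (isOpen_biUnion fun r _ => isOpen_codeSet hsmall he (X r)),
      fun x y => mem_isoClosure_iff_of_modIso _⟩

/-- Let `κ` be regular uncountable, `ν < κ` regular infinite, and `⟨X_r : r ∈ ^ν2⟩` a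
family of pairwise non-embeddable *full* structures of size `ν` in the graph language.
Then for `A ≠ A' ⊆ ^ν2` the unions `O_A ≠ O_{A'}` of the isomorphism-closures of the
basic open sets of codes of the `X_r` are distinct; hence there are `2^(2^ν)` many open
isomorphism-invariant subsets of `Mod^κ_L` with the bounded topology. -/
theorem stmt_17 (κ ν : Cardinal) (hκreg : κ.IsRegular) (hκunc : ℵ₀ < κ)
    (hνinf : ℵ₀ ≤ ν) (hνreg : ν.IsRegular) (hνκ : ν < κ)
    (X : (ν.ord.ToType → Bool) → ν.ord.ToType → ν.ord.ToType → Bool)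
    (hfull : ∀ r a, ∃ b, X r a b = true ∨ X r b a = true)
    (hnonemb : ∀ r s, r ≠ s →
      ¬ ∃ f : ν.ord.ToType → ν.ord.ToType, Function.Injective f ∧
        ∀ a b, X s (f a) (f b) = X r a b)
    (e : ν.ord.ToType → κ.ord.ToType) (he : Function.Injective e) :
    (∀ A A' : Set (ν.ord.ToType → Bool), A ≠ A' →
      {y : κ.ord.ToType → κ.ord.ToType → Bool | ∃ r ∈ A,
          ∃ x : κ.ord.ToType → κ.ord.ToType → Bool,
            (∀ a b : ν.ord.ToType, x (e a) (e b) = X r a b) ∧ modIso κ x y} ≠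
      {y : κ.ord.ToType → κ.ord.ToType → Bool | ∃ r ∈ A',
          ∃ x : κ.ord.ToType → κ.ord.ToType → Bool,
            (∀ a b : ν.ord.ToType, x (e a) (e b) = X r a b) ∧ modIso κ x y}) ∧
    (∃ F : Set (Set (κ.ord.ToType → κ.ord.ToType → Bool)),
      Cardinal.mk ↥F = (2 : Cardinal) ^ ((2 : Cardinal) ^ ν) ∧
      ∀ U ∈ F, (modTopology κ).IsOpen U ∧
        ∀ x y, modIso κ x y → (x ∈ U ↔ y ∈ U)) :=
  stmt_17_general κ ν hνinf hνκ X hfull hnonemb e he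
end

section
/- Let λ < κ be infinite cardinals with λ regular, and assume 2^{2^λ} > 2^κ. Then there is an open subset of the space Mod^κ_L of graph structures on κ (with the bounded topology) that is closed under isomorphism but is not the set of models of any L_{κ⁺κ}-sentence. -/
open Cardinal Set

/-!
Open invariant sets come from small structures: for a family `H : I → V → V → Prop` with
`#V < κ`, the set of `x` containing an induced copy of some `H i` with `i ∈ s` is open and
invariant, and it determines `s` when the `H i` have no isolated vertices and are pairwise
non-embeddable. Only `2 ^ κ` sets are axiomatizable, so it suffices to find such an
antichain with `#I = 2 ^ ν`.

For `ν = ℵ₀` take disjoint directed cycles of all lengths `≥ 3`, looped according to a set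
`A ⊆ ℕ`. For uncountable regular `ν`, Solovay's argument (via Fodor's lemma) splits the points of
countable cofinality into `ν` disjoint stationary sets, whose unions give `2 ^ ν` sets `W` with
pairwise stationary differences. The structure coding `W` is the order `ν` together with a tag
for each point, attached to a ladder of that point when the point lies in `W`. An embedding of the structure of `W`
into that of `W'` sends the tag of each closure point `δ ∈ W` of its action on the order to the
tag of `δ` itself, forcing `δ ∈ W'`; a stationary `W \ W'` contains such a closure point.
-/

section Coding

variable {T V : Type*}

def HasInducedCopy (x : T → T → Bool) (r : V → V → Prop) : Prop :=
  Nonempty (r ↪r fun a b => x a b = true)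

def NoIsolated (r : V → V → Prop) : Prop :=
  ∀ v, ∃ w, r v w ∨ r w v

open Classical in
noncomputable def pushGraph (e : V → T) (r : V → V → Prop) : T → T → Bool :=
  fun a b => decide (Relation.Map r e e a b)

theorem pushGraph_eq_true {e : V → T} {r : V → V → Prop} {a b : T} :
    pushGraph e r a b = true ↔ Relation.Map r e e a b := by
  simp [pushGraph]

theorem pushGraph_apply {e : V → T} (he : Function.Injective e) (r : V → V → Prop) (v w : V) :
    pushGraph e r (e v) (e w) = true ↔ r v w := by
  rw [pushGraph_eq_true]
  constructor
  · rintro ⟨v', w', h, hv, hw⟩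
    rwa [← he hv, ← he hw]
  · exact fun h => ⟨v, w, h, rfl, rfl⟩

theorem hasInducedCopy_pushGraph {e : V → T} (he : Function.Injective e) (r : V → V → Prop) :
    HasInducedCopy (pushGraph e r) r :=
  ⟨⟨⟨e, he⟩, pushGraph_apply he r _ _⟩⟩

/-- A copy of `s` inside `pushGraph e r` cannot use the vertices outside the range of `e`,
since they carry no edges. -/
theorem HasInducedCopy.of_pushGraph {e : V → T} (he : Function.Injective e)
    {r s : V → V → Prop} (hs : NoIsolated s) (h : HasInducedCopy (pushGraph e r) s) :
    Nonempty (s ↪r r) := by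
  obtain ⟨f⟩ := h
  have hrange : ∀ v, ∃ u, e u = f v := by
    intro v
    obtain ⟨w, hw | hw⟩ := hs v
    · obtain ⟨u, -, -, hu, -⟩ := pushGraph_eq_true.1 (f.map_rel_iff.2 hw)
      exact ⟨u, hu⟩
    · obtain ⟨-, u, -, -, hu⟩ := pushGraph_eq_true.1 (f.map_rel_iff.2 hw)
      exact ⟨u, hu⟩
  choose g hg using hrange
  refine ⟨⟨⟨g, fun v w h => f.injective ?_⟩, fun {v w} => ?_⟩⟩
  · rw [← hg, ← hg, h]
  · change r (g v) (g w) ↔ s v w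
    rw [← pushGraph_apply he r, hg, hg]
    exact f.map_rel_iff

end Coding

section BoundedTopology

variable {κ : Cardinal} {V : Type}

theorem isOpen_setOf_hasInducedCopy (hκ : ℵ₀ ≤ κ) (hV : #V < κ) (r : V → V → Prop) :
    (modTopology κ).IsOpen {x | HasInducedCopy x r} := by
  let := modTopology κ
  have hcopy : {x | HasInducedCopy x r} = ⋃ e : V ↪ κ.ord.ToType,
      {x | ∀ p ∈ range (Prod.map e e), x p.1 p.2 = pushGraph e r p.1 p.2} := by
    ext x
    simp only [mem_ofPred_eq, mem_iUnion, mem_range, forall_exists_index, Prod.forall,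
      Prod.map, Prod.mk.injEq, and_imp]
    constructor
    · rintro ⟨f⟩
      refine ⟨f.toEmbedding, ?_⟩
      rintro _ _ v w rfl rfl
      rw [Bool.eq_iff_iff, pushGraph_apply f.toEmbedding.injective]
      exact f.map_rel_iff
    · rintro ⟨e, he⟩
      refine ⟨⟨e, fun {v w} => ?_⟩⟩
      rw [he _ _ v w rfl rfl, pushGraph_apply e.injective]
  rw [hcopy]
  refine isOpen_iUnion fun e => TopologicalSpace.isOpen_generateFrom_of_mem
    ⟨_, pushGraph e r, ?_, rfl⟩
  calc #(range (Prod.map e e)) ≤ #(V × V) := mk_range_le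
    _ = #V * #V := by rw [mk_prod, lift_id]
    _ < κ := mul_lt_of_lt hκ hV hV

theorem hasInducedCopy_iff_of_modIso {x y : κ.ord.ToType → κ.ord.ToType → Bool}
    (hxy : modIso κ x y) (r : V → V → Prop) : HasInducedCopy x r ↔ HasInducedCopy y r := by
  obtain ⟨p, hp⟩ := hxy
  let φ : (fun a b => x a b = true) ≃r (fun a b => y a b = true) :=
    ⟨p, fun {a b} => by rw [hp]⟩
  exact ⟨fun ⟨f⟩ => ⟨f.trans φ.toRelEmbedding⟩, fun ⟨f⟩ => ⟨f.trans φ.symm.toRelEmbedding⟩⟩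

end BoundedTopology

section Counting

variable {T V I : Type*}

def IsEmbeddingAntichain (H : I → V → V → Prop) : Prop :=
  ∀ i j, Nonempty (H i ↪r H j) → i = j

theorem injective_iUnion_setOf_hasInducedCopy (e : V ↪ T) {H : I → V → V → Prop}
    (hH : ∀ i, NoIsolated (H i)) (hanti : IsEmbeddingAntichain H) :
    Function.Injective fun s : Set I => ⋃ i ∈ s, {x : T → T → Bool | HasInducedCopy x (H i)} := by
  have hmem : ∀ i (s : Set I),
      pushGraph e (H i) ∈ ⋃ j ∈ s, {x | HasInducedCopy x (H j)} ↔ i ∈ s := by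
    intro i s
    simp only [mem_iUnion, mem_ofPred_eq, exists_prop]
    refine ⟨fun ⟨j, hj, hcopy⟩ => ?_, fun hi => ⟨i, hi, hasInducedCopy_pushGraph e.injective _⟩⟩
    rwa [← hanti j i (hcopy.of_pushGraph e.injective (hH j))]
  intro s s' h
  ext i
  rw [← hmem i s, ← hmem i s']
  exact Eq.to_iff (congrArg (pushGraph e (H i) ∈ ·) h)

end Counting

theorem exists_isOpen_invariant_ne {κ : Cardinal} (hκ : ℵ₀ ≤ κ) {I V : Type}
    {H : I → V → V → Prop} (hV : #V < κ) (hH : ∀ i, NoIsolated (H i))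
    (hanti : IsEmbeddingAntichain H) (hcard : (2 : Cardinal) ^ κ < 2 ^ #I) :
    ∀ (S : Type) (_ : #S ≤ (2 : Cardinal) ^ κ)
      (Mods : S → Set (κ.ord.ToType → κ.ord.ToType → Bool)),
      ∃ U : Set (κ.ord.ToType → κ.ord.ToType → Bool),
        (modTopology κ).IsOpen U ∧ (∀ x y, modIso κ x y → (x ∈ U ↔ y ∈ U)) ∧
        ∀ φ : S, Mods φ ≠ U := by
  intro S hS Mods
  let U : Set I → Set (κ.ord.ToType → κ.ord.ToType → Bool) :=
    fun s => ⋃ i ∈ s, {x | HasInducedCopy x (H i)}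
  have hopen : ∀ s, (modTopology κ).IsOpen (U s) := by
    let := modTopology κ
    exact fun s => isOpen_biUnion fun i _ => isOpen_setOf_hasInducedCopy hκ hV (H i)
  have hinv : ∀ s x y, modIso κ x y → (x ∈ U s ↔ y ∈ U s) := by
    intro s x y hxy
    simp only [U, mem_iUnion, mem_ofPred_eq, hasInducedCopy_iff_of_modIso hxy]
  obtain ⟨e⟩ : Nonempty (V ↪ κ.ord.ToType) := by
    rw [← Cardinal.le_def, mk_toType, card_ord]
    exact hV.le
  by_contra! hU
  choose Φ hΦ using fun s => hU (U s) (hopen s) (hinv s)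
  have hΦ : Function.Injective Φ := fun s s' h =>
    injective_iUnion_setOf_hasInducedCopy e hH hanti ((hΦ s).symm.trans (h ▸ hΦ s'))
  exact (mk_le_of_injective hΦ |>.trans hS).not_gt (by rwa [mk_set])

section Cycles

abbrev CycleVertex : Type := Σ n : ℕ, ZMod (n + 3)

def cycleSucc (u : CycleVertex) : CycleVertex := ⟨u.1, u.2 + 1⟩

def cycleGraph (A : Set ℕ) (u v : CycleVertex) : Prop :=
  v = cycleSucc u ∨ (v = u ∧ u.1 ∈ A)

theorem cycleSucc_iterate (j : ℕ) (u : CycleVertex) : cycleSucc^[j] u = ⟨u.1, u.2 + j⟩ := by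
  induction j with
  | zero => simp
  | succ j ih => rw [Function.iterate_succ_apply', ih, cycleSucc, Nat.cast_succ, add_assoc]

theorem cycleSucc_iterate_eq_self_iff {j : ℕ} {u : CycleVertex} :
    cycleSucc^[j] u = u ↔ u.1 + 3 ∣ j := by
  rw [cycleSucc_iterate, Sigma.ext_iff]
  simp [ZMod.natCast_eq_zero_iff]

theorem cycleSucc_ne (u : CycleVertex) : cycleSucc u ≠ u := by
  have := (cycleSucc_iterate_eq_self_iff (j := 1) (u := u)).not.2
    (Nat.not_dvd_of_pos_of_lt one_pos (by omega))
  simpa using this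

theorem cycleGraph_self_iff {A : Set ℕ} {u : CycleVertex} : cycleGraph A u u ↔ u.1 ∈ A := by
  simp [cycleGraph, (cycleSucc_ne u).symm]

theorem noIsolated_cycleGraph (A : Set ℕ) : NoIsolated (cycleGraph A) :=
  fun u => ⟨cycleSucc u, Or.inl (Or.inl rfl)⟩

section Embedding

variable {A B : Set ℕ} (g : cycleGraph A ↪r cycleGraph B)

theorem map_cycleSucc_of_embedding (u : CycleVertex) : g (cycleSucc u) = cycleSucc (g u) := by
  rcases g.map_rel_iff.2 (Or.inl rfl : cycleGraph A u (cycleSucc u)) with h | ⟨h, -⟩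
  · exact h
  · exact absurd (g.injective h) (cycleSucc_ne u)

/-- Since `g` commutes with `cycleSucc`, the image cycle has length dividing that of the cycle,
and conversely by injectivity. -/
theorem fst_apply_of_embedding (u : CycleVertex) : (g u).1 = u.1 := by
  have hcomm : Function.Semiconj g cycleSucc cycleSucc := map_cycleSucc_of_embedding g
  have h₁ : (g u).1 + 3 ∣ u.1 + 3 := by
    rw [← cycleSucc_iterate_eq_self_iff, ← hcomm.iterate_right,
      cycleSucc_iterate_eq_self_iff.2 dvd_rfl]
  have h₂ : u.1 + 3 ∣ (g u).1 + 3 := by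
    rw [← cycleSucc_iterate_eq_self_iff]
    apply g.injective
    rw [hcomm.iterate_right, cycleSucc_iterate_eq_self_iff.2 dvd_rfl]
  have := Nat.dvd_antisymm h₁ h₂
  omega

end Embedding

theorem isEmbeddingAntichain_cycleGraph : IsEmbeddingAntichain cycleGraph := by
  rintro A B ⟨g⟩
  ext n
  let u : CycleVertex := ⟨n, 0⟩
  rw [← show u.1 = n from rfl, ← cycleGraph_self_iff, ← g.map_rel_iff, cycleGraph_self_iff,
    fst_apply_of_embedding g]

end Cycles

section Ladders

variable {α : Type} [LinearOrder α]

def omegaLimits (α : Type) [LinearOrder α] : Set α :=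
  {δ | ∃ l : ℕ → α, StrictMono l ∧ IsLUB (range l) δ}

open Classical in
noncomputable def ladder (δ : α) : ℕ → α :=
  if h : δ ∈ omegaLimits α then h.choose else fun _ => δ

variable {δ : α}

theorem strictMono_ladder (h : δ ∈ omegaLimits α) : StrictMono (ladder δ) := by
  rw [ladder, dif_pos h]
  exact h.choose_spec.1

theorem isLUB_range_ladder (h : δ ∈ omegaLimits α) : IsLUB (range (ladder δ)) δ := by
  rw [ladder, dif_pos h]
  exact h.choose_spec.2

theorem ladder_lt (h : δ ∈ omegaLimits α) (n : ℕ) : ladder δ n < δ :=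
  (strictMono_ladder h n.lt_succ_self).trans_le ((isLUB_range_ladder h).1 ⟨n + 1, rfl⟩)

theorem exists_lt_ladder (h : δ ∈ omegaLimits α) {b : α} (hb : b < δ) : ∃ n, b < ladder δ n := by
  obtain ⟨_, ⟨n, rfl⟩, hn⟩ := (lt_isLUB_iff (isLUB_range_ladder h)).1 hb
  exact ⟨n, hn⟩

theorem bddAbove_range_of_aleph0_lt_cof (hα : ℵ₀ < Order.cof α) (f : ℕ → α) :
    BddAbove (range f) :=
  .of_not_isCofinal fun h => (Order.cof_le h).not_gt
    ((le_aleph0_iff_set_countable.2 (countable_range f)).trans_lt hα)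

end Ladders

section NoMax

variable {α : Type} [LinearOrder α] [NoMaxOrder α]

theorem IsClub.exists_gt {C : Set α} (hC : IsClub C) (x : α) : ∃ c ∈ C, x < c := by
  obtain ⟨y, hy⟩ := NoMaxOrder.exists_gt x
  obtain ⟨c, hc, hyc⟩ := hC.isCofinal y
  exact ⟨c, hc, hy.trans_le hyc⟩

theorem not_isStationary_of_subset_Iic {s : Set α} {η : α} (hs : s ⊆ Iic η) :
    ¬ IsStationary s := by
  rw [not_isStationary_iff]
  refine ⟨Ioi η, ⟨(isUpperSet_Ioi η).dirSupClosed, fun a => ?_⟩, ?_⟩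
  · obtain ⟨b, hb⟩ := exists_gt (max a η)
    exact ⟨b, (le_max_right a η).trans_lt hb, (le_max_left a η).trans hb.le⟩
  · exact disjoint_of_subset_left hs (Iic_disjoint_Ioi le_rfl)

end NoMax

section WellOrder

variable {α : Type} [LinearOrder α] [WellFoundedLT α]

theorem BddAbove.exists_isLUB_of_wellFoundedLT {s : Set α} (hs : BddAbove s) :
    ∃ a, IsLUB s a :=
  ⟨wellFounded_lt.min _ hs, wellFounded_lt.min_mem _ hs, fun _ hb => wellFounded_lt.min_le hb⟩

theorem exists_omegaLimit_isLUB_iterate (hα : ℵ₀ < Order.cof α) {G : α → α}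
    (hG : ∀ x, x < G x) (a : α) : ∃ δ ∈ omegaLimits α, IsLUB (range fun n => G^[n] a) δ := by
  obtain ⟨δ, hδ⟩ := (bddAbove_range_of_aleph0_lt_cof hα _).exists_isLUB_of_wellFoundedLT
  have hmono : StrictMono fun n => G^[n] a :=
    strictMono_nat_of_lt_succ fun n => by simpa [Function.iterate_succ_apply'] using hG _
  exact ⟨δ, ⟨_, hmono, hδ⟩, hδ⟩

variable [NoMaxOrder α]

theorem isStationary_omegaLimits (hα : ℵ₀ < Order.cof α) : IsStationary (omegaLimits α) := by
  intro C hC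
  have : Nonempty α := Order.cof_ne_zero_iff.1 (aleph0_pos.trans hα).ne'
  choose G hGC hG using hC.exists_gt
  obtain ⟨δ, hδ, hlub⟩ := exists_omegaLimit_isLUB_iterate hα hG (G (Classical.arbitrary α))
  refine ⟨δ, hδ, hC.isLUB_mem ?_ (range_nonempty _) hlub⟩
  rintro _ ⟨n, rfl⟩
  show G^[n] (G _) ∈ C
  rw [← Function.iterate_succ_apply, Function.iterate_succ_apply']
  exact hGC _

variable [IsRegularCardinalOrder α]

theorem bddAbove_image_Iic (f : α → α) (x : α) : BddAbove (f '' Iic x) := by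
  obtain ⟨y, hy⟩ := exists_gt x
  refine .of_not_isCofinal fun h => (Order.cof_le h).not_gt ?_
  calc #(f '' Iic x) ≤ #(Iic x) := mk_image_le
    _ ≤ #(Iio y) := mk_le_mk_of_subset (Iic_subset_Iio.2 hy)
    _ < #α := mk_Iio_lt y ord_cardinalMk
    _ = Order.cof α := Order.cof_eq_cardinalMk.symm

theorem isClub_setOf_forall_lt_map_lt (hα : ℵ₀ < Order.cof α) (F : α → α) :
    IsClub {δ | ∀ b < δ, F b < δ} := by
  refine ⟨dirSupClosed_iff_of_linearOrder.2 fun t ht _ a ha b hb => ?_, fun a => ?_⟩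
  · obtain ⟨x, hxt, hbx⟩ := (lt_isLUB_iff ha).1 hb
    exact (ht hxt b hbx).trans_le (ha.1 hxt)
  · have hG : ∀ x, ∃ y, x < y ∧ ∀ b ≤ x, F b < y := by
      intro x
      obtain ⟨u, hu⟩ := bddAbove_image_Iic F x
      obtain ⟨y, hy⟩ := exists_gt (max x u)
      exact ⟨y, (le_max_left _ _).trans_lt hy,
        fun b hb => (hu (mem_image_of_mem F hb)).trans_lt ((le_max_right _ _).trans_lt hy)⟩
    choose G hG hGF using hG
    obtain ⟨δ, -, hδ⟩ := exists_omegaLimit_isLUB_iterate hα hG a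
    refine ⟨δ, fun b hb => ?_, hδ.1 ⟨0, rfl⟩⟩
    obtain ⟨_, ⟨n, rfl⟩, hbn⟩ := (lt_isLUB_iff hδ).1 hb
    exact (hGF _ b hbn.le).trans_le (hδ.1 ⟨n + 1, Function.iterate_succ_apply' G n a⟩)

/-- Fodor's lemma. -/
theorem IsStationary.exists_isStationary_fiber (hα : ℵ₀ < Order.cof α) {S : Set α}
    (hS : IsStationary S) {ψ : α → α} (hψ : ∀ δ ∈ S, ψ δ < δ) :
    ∃ c, IsStationary {δ ∈ S | ψ δ = c} := by
  by_contra! h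
  simp_rw [not_isStationary_iff] at h
  choose D hD hSD using h
  choose next hnextD hnext using fun c => (hD c).exists_gt
  choose F hF using fun b => bddAbove_image_Iic (fun c => next c b) b
  -- `δ` is a closure point of `F`, so every `D c` with `c < δ` is unbounded below `δ`.
  obtain ⟨δ, hδS, hδF⟩ := hS (isClub_setOf_forall_lt_map_lt hα F)
  have hcδ : ψ δ < δ := hψ δ hδS
  have hmem : ∀ b, ψ δ ≤ b → b < δ → next (ψ δ) b ∈ D (ψ δ) ∩ Iio δ := fun b hcb hbδ =>
    ⟨hnextD _ b, (hF b (mem_image_of_mem _ hcb)).trans_lt (hδF b hbδ)⟩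
  have hlub : IsLUB (D (ψ δ) ∩ Iio δ) δ := by
    refine ⟨fun x hx => hx.2.le, fun u hu => not_lt.1 fun huδ => ?_⟩
    have := hu (hmem (max (ψ δ) u) (le_max_left _ _) (max_lt hcδ huδ))
    exact ((le_max_right _ u).trans_lt (hnext _ _)).not_ge this
  have hδD : δ ∈ D (ψ δ) :=
    (hD _).isLUB_mem inter_subset_left ⟨_, hmem _ le_rfl hcδ⟩ hlub
  exact (hSD (ψ δ)).ne_of_mem ⟨hδS, rfl⟩ hδD rfl

/-- Solovay's splitting argument for the points of countable cofinality. -/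
theorem exists_isCofinal_isStationary_ladder_fiber (hα : ℵ₀ < Order.cof α) :
    ∃ n, IsCofinal {c | IsStationary {δ ∈ omegaLimits α | ladder δ n = c}} := by
  have key : ∀ η, ∃ n, IsStationary {δ ∈ omegaLimits α | η < ladder δ n} := by
    intro η
    have hcover : omegaLimits α ⊆ Iic η ∪ ⋃ n, {δ ∈ omegaLimits α | η < ladder δ n} := by
      intro δ hδ
      rcases le_or_gt δ η with h | h
      · exact Or.inl h
      · obtain ⟨n, hn⟩ := exists_lt_ladder hδ h
        exact Or.inr (mem_iUnion.2 ⟨n, hδ, hn⟩)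
    have := (isStationary_omegaLimits hα).mono hcover
    rw [isStationary_union_iff hα.ne', isStationary_iUnion_iff_of_countable hα.ne'] at this
    exact this.resolve_left (not_isStationary_of_subset_Iic subset_rfl)
  choose N hN using key
  obtain ⟨n, hn⟩ := isCofinal_of_isCofinal_iUnion (s := fun n => N ⁻¹' {n})
    (fun a => ⟨a, mem_iUnion.2 ⟨N a, rfl⟩, le_rfl⟩) (by simpa using hα)
  refine ⟨n, fun a => ?_⟩
  obtain ⟨η, rfl, haη⟩ := hn a
  obtain ⟨c, hc⟩ := (hN η).exists_isStationary_fiber hα fun δ hδ => ladder_lt hδ.1 (N η)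
  obtain ⟨δ, ⟨-, hηδ⟩, hδc⟩ := hc.nonempty
  exact ⟨c, hc.mono fun δ hδ => ⟨hδ.1.1, hδ.2⟩, haη.trans (hηδ.trans_eq hδc).le⟩

end WellOrder

section LadderGraph

variable {α : Type} [LinearOrder α]

/-- The spine `α` ordered by `<`, and a tag vertex for each `t : α`: the tag of `t ∈ W` receives
an edge from every point of the ladder of `t`, the tag of `t ∉ W` carries a loop. -/
def ladderGraph (W : Set α) : α ⊕ α → α ⊕ α → Prop
  | .inl x, .inl y => x < y
  | .inl x, .inr t => t ∈ W ∧ x ∈ range (ladder t)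
  | .inr t, .inr t' => t = t' ∧ t ∉ W
  | .inr _, .inl _ => False

theorem noIsolated_ladderGraph [NoMaxOrder α] (W : Set α) : NoIsolated (ladderGraph W) := by
  rintro (x | t)
  · obtain ⟨y, hy⟩ := exists_gt x
    exact ⟨.inl y, Or.inl hy⟩
  · by_cases ht : t ∈ W
    · exact ⟨.inl (ladder t 0), Or.inr ⟨ht, 0, rfl⟩⟩
    · exact ⟨.inr t, Or.inl ⟨rfl, ht⟩⟩

section Embedding

variable {W W' : Set α} (g : ladderGraph W ↪r ladderGraph W')

theorem exists_strictMono_of_ladderGraph_embedding [NoMaxOrder α] :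
    ∃ gs : α → α, StrictMono gs ∧ ∀ x, g (.inl x) = .inl (gs x) := by
  have hspine : ∀ x, ∃ y, g (.inl x) = .inl y := by
    intro x
    obtain ⟨y, hy⟩ := exists_gt x
    have hxy := g.map_rel_iff.2 (show ladderGraph W (.inl x) (.inl y) from hy)
    rcases hx : g (.inl x) with z | t
    · exact ⟨z, rfl⟩
    rcases hy' : g (.inl y) with z' | t' <;> rw [hx, hy'] at hxy
    · exact hxy.elim
    · obtain ⟨rfl, -⟩ := hxy
      exact absurd (g.injective (hx.trans hy'.symm)) (Sum.inl_injective.ne hy.ne)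
  choose gs hgs using hspine
  refine ⟨gs, fun x y hxy => ?_, hgs⟩
  have := g.map_rel_iff.2 (show ladderGraph W (.inl x) (.inl y) from hxy)
  rwa [hgs, hgs] at this

variable {gs : α → α}

/-- Tags of points of `W` go to tags of points of `W'`: a tag cannot go to the spine, since all
spine points above it would be forced onto the same point. -/
theorem exists_mem_of_ladderGraph_embedding [NoMaxOrder α]
    (hgs : ∀ x, g (.inl x) = .inl (gs x)) (hmono : StrictMono gs) {t : α} (ht : t ∈ W)
    (htE : t ∈ omegaLimits α) : ∃ t' ∈ W', g (.inr t) = .inr t' := by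
  rcases hgt : g (.inr t) with z | t'
  · exfalso
    have key : ∀ x, t ≤ x → gs x = z := by
      intro x hx
      have h₁ : ¬ ladderGraph W' (.inl (gs x)) (.inl z) := by
        rw [← hgs, ← hgt, g.map_rel_iff]
        rintro ⟨-, n, hn⟩
        exact (ladder_lt htE n).not_ge (hn ▸ hx)
      have h₂ : ¬ ladderGraph W' (.inl z) (.inl (gs x)) := by
        rw [← hgs, ← hgt, g.map_rel_iff]
        exact id
      exact le_antisymm (not_lt.1 h₂) (not_lt.1 h₁)
    obtain ⟨y, hy⟩ := exists_gt t
    exact hy.ne (hmono.injective ((key t le_rfl).trans (key y hy.le).symm))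
  · refine ⟨t', ?_, rfl⟩
    by_contra ht'
    have : ladderGraph W' (g (.inr t)) (g (.inr t)) := by
      rw [hgt]
      exact ⟨rfl, ht'⟩
    exact (g.map_rel_iff.1 this).2 ht

/-- At a closure point `δ` of the spine map, the ladder of `δ` is carried into the ladder of the
image tag `t'` cofinally below `δ`, so `t' = δ`. -/
theorem eq_of_ladderGraph_embedding [WellFoundedLT α]
    (hgs : ∀ x, g (.inl x) = .inl (gs x)) (hmono : StrictMono gs) {δ t' : α} (hδW : δ ∈ W)
    (hδE : δ ∈ omegaLimits α) (ht'E : t' ∈ omegaLimits α) (hδ : ∀ b < δ, gs b < δ)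
    (hg : g (.inr δ) = .inr t') : t' = δ := by
  have hm : ∀ n, ∃ m, ladder t' m = gs (ladder δ n) := by
    intro n
    have : ladderGraph W (.inl (ladder δ n)) (.inr δ) := ⟨hδW, n, rfl⟩
    rw [← g.map_rel_iff, hgs, hg] at this
    exact this.2
  choose m hm using hm
  have hminj : Function.Injective m := fun n n' h =>
    (strictMono_ladder hδE).injective (hmono.injective (by rw [← hm, ← hm, h]))
  apply le_antisymm
  · refine (isLUB_range_ladder ht'E).2 ?_
    rintro _ ⟨k, rfl⟩
    obtain ⟨n, hn⟩ := (hminj.nat_tendsto_atTop.eventually_ge_atTop k).exists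
    calc ladder t' k ≤ ladder t' (m n) := (strictMono_ladder ht'E).monotone hn
      _ = gs (ladder δ n) := hm n
      _ ≤ δ := (hδ _ (ladder_lt hδE n)).le
  · refine (isLUB_range_ladder hδE).2 ?_
    rintro _ ⟨n, rfl⟩
    calc ladder δ n ≤ gs (ladder δ n) := hmono.le_apply
      _ = ladder t' (m n) := (hm n).symm
      _ ≤ t' := (ladder_lt ht'E _).le

end Embedding

theorem isEmpty_ladderGraph_embedding [WellFoundedLT α] [NoMaxOrder α]
    [IsRegularCardinalOrder α] (hα : ℵ₀ < Order.cof α) {W W' : Set α}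
    (hW : W ⊆ omegaLimits α) (hW' : W' ⊆ omegaLimits α) (hdiff : IsStationary (W \ W')) :
    IsEmpty (ladderGraph W ↪r ladderGraph W') := by
  refine ⟨fun g => ?_⟩
  obtain ⟨gs, hmono, hgs⟩ := exists_strictMono_of_ladderGraph_embedding g
  obtain ⟨δ, ⟨hδW, hδW'⟩, hδ⟩ := hdiff (isClub_setOf_forall_lt_map_lt hα gs)
  obtain ⟨t', ht', hg⟩ := exists_mem_of_ladderGraph_embedding g hgs hmono hδW (hW hδW)
  exact hδW' (eq_of_ladderGraph_embedding g hgs hmono hδW (hW hδW) (hW' ht') hδ hg ▸ ht')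

end LadderGraph

open Function in
theorem subset_iUnion_diff_iUnion {ι β : Type*} {F : ι × Bool → Set β}
    (hF : Pairwise (Disjoint on F)) {A B : ι → Bool} {j : ι} (hj : A j ≠ B j) :
    F (j, A j) ⊆ (⋃ i, F (i, A i)) \ ⋃ i, F (i, B i) := by
  intro x hx
  refine ⟨mem_iUnion.2 ⟨j, hx⟩, fun h => ?_⟩
  obtain ⟨i, hi⟩ := mem_iUnion.1 h
  refine (hF fun hji => hj ?_).ne_of_mem hx hi rfl
  obtain ⟨rfl, h⟩ := Prod.mk.inj hji
  exact h

open Function in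
theorem exists_ladderGraph_antichain {α : Type} [LinearOrder α] [WellFoundedLT α]
    [NoMaxOrder α] [IsRegularCardinalOrder α] (hα : ℵ₀ < Order.cof α) :
    ∃ (I : Type) (H : I → α ⊕ α → α ⊕ α → Prop),
      #I = 2 ^ #α ∧ (∀ i, NoIsolated (H i)) ∧ IsEmbeddingAntichain H := by
  obtain ⟨n, hR⟩ := exists_isCofinal_isStationary_ladder_fiber hα
  set R := {c | IsStationary {δ ∈ omegaLimits α | ladder δ n = c}}
  have hRcard : #R = #α :=
    le_antisymm (mk_set_le R) (Order.cof_eq_cardinalMk (α := α) ▸ Order.cof_le hR)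
  have hαinf : ℵ₀ ≤ #α := Order.cof_eq_cardinalMk (α := α) ▸ hα.le
  obtain ⟨e⟩ : Nonempty (R × Bool ≃ R) := by
    rw [← Cardinal.eq, mk_prod, lift_id, lift_id, mk_bool, hRcard]
    exact mul_eq_left hαinf (ofNat_le_aleph0.trans hαinf) two_ne_zero
  let W : (R → Bool) → Set α := fun A => ⋃ j, {δ ∈ omegaLimits α | ladder δ n = e (j, A j)}
  have hW : ∀ A, W A ⊆ omegaLimits α := fun A _ hδ => (mem_iUnion.1 hδ).elim fun _ h => h.1
  refine ⟨R → Bool, fun A => ladderGraph (W A), by simp [hRcard],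
    fun A => noIsolated_ladderGraph _, fun A B ⟨g⟩ => ?_⟩
  by_contra hAB
  obtain ⟨j, hj⟩ := Function.ne_iff.1 hAB
  have hdisj : Pairwise (Disjoint on fun p => {δ ∈ omegaLimits α | ladder δ n = e p}) :=
    fun p q hpq => disjoint_left.2 fun δ hp hq =>
      hpq (e.injective (Subtype.ext (hp.2.symm.trans hq.2)))
  have hdiff : IsStationary (W A \ W B) :=
    (e (j, A j)).2.mono (subset_iUnion_diff_iUnion hdisj hj)
  exact (isEmpty_ladderGraph_embedding hα (hW A) (hW B) hdiff).false g

theorem isRegularCardinalOrder_toType_ord {ν : Cardinal} (h : ν.IsRegular) :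
    IsRegularCardinalOrder ν.ord.ToType :=
  ⟨by rw [Ordinal.type_toType, Ordinal.cof_toType, h.cof_ord]⟩

/-- Let `ν < κ` be infinite cardinals with `ν` regular, and assume `2^(2^ν) > 2^κ`. Then
there is an open, isomorphism-invariant subset of the space `Mod^κ_L` of graph structures
on `κ` (with the bounded topology) that is not the class of models of any
`L_{κ⁺κ}`-sentence. (Since `|L_{κ⁺κ}| = 2^κ`, this is expressed by: for any assignment of
model classes to a set of sentences of size `≤ 2^κ`, some open invariant set is omitted.) -/
theorem stmt_18 (κ ν : Cardinal) (hνinf : ℵ₀ ≤ ν) (hνreg : ν.IsRegular) (hνκ : ν < κ)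
    (hcard : (2 : Cardinal) ^ κ < (2 : Cardinal) ^ ((2 : Cardinal) ^ ν)) :
    ∀ (S : Type) (hS : Cardinal.mk S ≤ (2 : Cardinal) ^ κ)
      (Mods : S → Set (κ.ord.ToType → κ.ord.ToType → Bool)),
      ∃ U : Set (κ.ord.ToType → κ.ord.ToType → Bool),
        (modTopology κ).IsOpen U ∧
        (∀ x y, modIso κ x y → (x ∈ U ↔ y ∈ U)) ∧
        ∀ φ : S, Mods φ ≠ U := by
  have hκ : ℵ₀ ≤ κ := hνinf.trans hνκ.le
  rcases hνinf.eq_or_lt with rfl | hν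
  · exact exists_isOpen_invariant_ne hκ (mk_le_aleph0.trans_lt hνκ) noIsolated_cycleGraph
      isEmbeddingAntichain_cycleGraph (by rwa [mk_set, mk_nat])
  · have := Cardinal.noMaxOrder hνinf
    have := isRegularCardinalOrder_toType_ord hνreg
    have hmk : #ν.ord.ToType = ν := by rw [mk_toType, card_ord]
    obtain ⟨I, H, hI, hH, hanti⟩ := exists_ladderGraph_antichain (α := ν.ord.ToType)
      (by rwa [Ordinal.cof_toType, hνreg.cof_ord])
    refine exists_isOpen_invariant_ne hκ ?_ hH hanti (by rwa [hI, hmk])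
    rwa [mk_sum, lift_id, hmk, add_eq_self hνinf]
end
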